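/- Let R be an SDT ring. Then 6 ∈ J(R), where J(R) is the Jacobson radical of R. -/

import Mathlib

/-- `Δ(R) = {x ∈ R : x + u ∈ U(R) for every u ∈ U(R)}`. -/
def Delta (R : Type*) [Ring R] : Set R :=
  {x : R | ∀ u : R, IsUnit u → IsUnit (x + u)}

/-- A ring `R` is a strongly Δ tripotent (SDT) ring if every `a ∈ R` can be written
`a = e + d` with `e³ = e`, `d ∈ Δ(R)` and `ed = de`. -/
def IsSDTRing (R : Type*) [Ring R] : Prop :=
  ∀ a : R, ∃ e d : R, e ^ 3 = e ∧ d ∈ Delta R ∧ e * d = d * e ∧ a = e + d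

section DeltaLemmas

variable {R : Type*} [Ring R] {x y : R}

lemma delta_add (hx : x ∈ Delta R) (hy : y ∈ Delta R) : x + y ∈ Delta R := by
  intro u hu
  have := hx (y + u) (hy u hu)
  rwa [← add_assoc] at this

lemma delta_neg (hx : x ∈ Delta R) : -x ∈ Delta R := by
  intro u hu
  have := (hx (-u) hu.neg).neg
  rwa [neg_add, neg_neg] at this

lemma delta_mul_unit (hx : x ∈ Delta R) {u : R} (hu : IsUnit u) : x * u ∈ Delta R := by
  intro v hv
  obtain ⟨w, rfl⟩ := hu
  have h1 : IsUnit (x + v * ↑w⁻¹) := hx _ (hv.mul (Units.isUnit w⁻¹))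
  have h2 : (x + v * ↑w⁻¹) * ↑w = x * ↑w + v := by
    rw [add_mul, mul_assoc, Units.inv_mul, mul_one]
  have := h1.mul w.isUnit
  rwa [h2] at this

lemma delta_mul (hx : x ∈ Delta R) (hy : y ∈ Delta R) : x * y ∈ Delta R := by
  have h1 : IsUnit (y + 1) := hy 1 isUnit_one
  have h2 : x * (y + 1) ∈ Delta R := delta_mul_unit hx h1
  have h3 : x * y = x * (y + 1) + -x := by noncomm_ring
  rw [h3]
  exact delta_add h2 (delta_neg hx)

lemma delta_zero : (0 : R) ∈ Delta R := by
  intro u hu; rwa [zero_add]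

lemma delta_zsmul (n : ℤ) (hx : x ∈ Delta R) : n • x ∈ Delta R := by
  induction n using Int.induction_on with
  | zero => simpa using (delta_zero (R := R))
  | succ k ih => rw [add_zsmul, one_zsmul]; exact delta_add ih hx
  | pred k ih => rw [sub_zsmul, one_zsmul]; exact delta_add ih (delta_neg hx)

lemma six_mem_delta (hR : IsSDTRing R) : (6 : R) ∈ Delta R := by
  obtain ⟨e, d, he, hd, -, h2⟩ := hR 2
  have hed : e = 2 - d := by rw [h2]; noncomm_ring
  rw [hed] at he
  have key : (6 : R) = d * d * d + (-6 : ℤ) • (d * d) + (11 : ℤ) • d := by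
    have expand : (6 : R) - (d * d * d + (-6 : ℤ) • (d * d) + (11 : ℤ) • d)
        = (2 - d) ^ 3 - (2 - d) := by
      try push_cast
      noncomm_ring
      try simp only [zsmul_eq_mul, nsmul_eq_mul, Int.cast_ofNat, Int.reduceNeg, neg_smul, one_smul,
        mul_one, Nat.cast_ofNat, Int.cast_one, Nat.cast_one]
      try norm_num
      try abel
    have : (6 : R) - (d * d * d + (-6 : ℤ) • (d * d) + (11 : ℤ) • d) = 0 := by
      rw [expand, he, sub_self]
    exact sub_eq_zero.mp this
  rw [key]
  exact delta_add (delta_add (delta_mul (delta_mul hd hd) hd)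
    (delta_zsmul _ (delta_mul hd hd))) (delta_zsmul _ hd)

end DeltaLemmas

theorem six_mem_jacobson {R : Type*} [Ring R] (hR : IsSDTRing R) :
    (6 : R) ∈ TwoSidedIdeal.jacobson (⊥ : TwoSidedIdeal R) := by
  have h6 : (6 : R) ∈ Delta R := six_mem_delta hR
  have h7 : IsUnit (7 : R) := by
    have := h6 1 isUnit_one
    norm_num at this
    exact this
  have h5 : IsUnit (5 : R) := by
    have := h6 (-1) isUnit_one.neg
    norm_num at this
    exact this
  have h35 : IsUnit (35 : R) := by
    have := h5.mul h7
    norm_num at this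
    exact this
  -- For any tripotent e, 1 + 6e is a unit.
  have tripotent_unit : ∀ e : R, e ^ 3 = e → IsUnit (1 + 6 * e) := by
    intro e he
    obtain ⟨v, hv⟩ := h35
    set c : R := 35 + 6 * e - 36 * e ^ 2 with hc
    have key1 : (1 + 6 * e) * c = 35 := by
      have : (1 + 6 * e) * c = 35 + 216 * e - 216 * e ^ 3 := by
        rw [hc]
        try push_cast
        noncomm_ring
        try simp only [zsmul_eq_mul, nsmul_eq_mul, Int.cast_ofNat, Int.reduceNeg, neg_smul, one_smul,
          mul_one, Nat.cast_ofNat, Int.cast_one, Nat.cast_one]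
        try norm_num
        try abel
      rw [this, he]
      try push_cast
      noncomm_ring
      try simp only [zsmul_eq_mul, nsmul_eq_mul, Int.cast_ofNat, Int.reduceNeg, neg_smul, one_smul,
        mul_one, Nat.cast_ofNat, Int.cast_one, Nat.cast_one]
      try norm_num
      try abel
    have key2 : c * (1 + 6 * e) = 35 := by
      have : c * (1 + 6 * e) = 35 + 216 * e - 216 * e ^ 3 := by
        rw [hc]
        try push_cast
        noncomm_ring
        try simp only [zsmul_eq_mul, nsmul_eq_mul, Int.cast_ofNat, Int.reduceNeg, neg_smul, one_smul,
          mul_one, Nat.cast_ofNat, Int.cast_one, Nat.cast_one]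
        try norm_num
        try abel
      rw [this, he]
      try push_cast
      noncomm_ring
      try simp only [zsmul_eq_mul, nsmul_eq_mul, Int.cast_ofNat, Int.reduceNeg, neg_smul, one_smul,
        mul_one, Nat.cast_ofNat, Int.cast_one, Nat.cast_one]
      try norm_num
      try abel
    have hcomm : Commute (1 + 6 * e) (↑v : R) := by
      rw [hv]
      have : ((35 : ℕ) : R) = (35 : R) := by norm_num
      exact this ▸ (Nat.cast_commute 35 (1 + 6 * e)).symm
    have hcomm' : Commute (1 + 6 * e) (↑v⁻¹ : R) := hcomm.units_inv_right
    refine isUnit_iff_exists.mpr ⟨c * ↑v⁻¹, ?_, ?_⟩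
    · rw [← mul_assoc, key1, ← hv, Units.mul_inv]
    · rw [mul_assoc, ← hcomm'.eq, ← mul_assoc, key2, ← hv, Units.mul_inv]
  rw [TwoSidedIdeal.mem_jacobson_iff]
  intro y
  obtain ⟨e, d, he, hd, -, hy⟩ := hR y
  have h6d : 6 * d ∈ Delta R := delta_mul h6 hd
  have hu : IsUnit (6 * d + (1 + 6 * e)) := h6d _ (tripotent_unit e he)
  have heq : 6 * y + 1 = 6 * d + (1 + 6 * e) := by rw [hy]; noncomm_ring
  have hu' : IsUnit (6 * y + 1) := heq ▸ hu
  obtain ⟨u, hu⟩ := hu'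
  refine ⟨↑u⁻¹, ?_⟩
  rw [TwoSidedIdeal.mem_bot]
  have hy6 : y * (6 : R) = 6 * y := by
    have h := (Nat.cast_commute (6 : ℕ) y).eq
    push_cast at h
    exact h.symm
  calc ↑u⁻¹ * y * 6 + ↑u⁻¹ - 1 = ↑u⁻¹ * (y * 6 + 1) - 1 := by noncomm_ring
    _ = ↑u⁻¹ * (6 * y + 1) - 1 := by rw [hy6]
    _ = ↑u⁻¹ * ↑u - 1 := by rw [hu]
    _ = 0 := by rw [Units.inv_mul, sub_self]
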